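/- arXiv:2404.18137 — 3 statements merged into one kernel-verified Lean document; each statement's English description precedes it below -/
import Mathlib

section
/- Under the hypotheses of the previous identity, if additionally either both δ > 1 and ε > 1, or both δ < 1 and ε < 1, then π1(δ,ε) > π1(δ,1)·π1(1,ε) and π2(δ,ε) > π2(δ,1)·π2(1,ε). -/
/-- Two-sector transcendent equilibrium price of commodity 1. -/
noncomputable def pi1 (α01 α02 α12 α21 δ ε : ℝ) : ℝ :=
  (α01 * δ + α21 * α02 * δ * ε) / (1 - α21 * α12 * δ * ε)

/-- Two-sector transcendent equilibrium price of commodity 2. -/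
noncomputable def pi2 (α01 α02 α12 α21 δ ε : ℝ) : ℝ :=
  (α02 * ε + α12 * α01 * δ * ε) / (1 - α21 * α12 * δ * ε)

theorem pi_synergy_strict
    (α12 α21 : ℝ) (h12 : α12 ∈ Set.Ioo (0:ℝ) 1) (h21 : α21 ∈ Set.Ioo (0:ℝ) 1)
    (α01 α02 : ℝ) (hα01 : α01 = 1 - α21) (hα02 : α02 = 1 - α12)
    (δ ε : ℝ) (hδ : 0 < δ) (hε : 0 < ε)
    (hDδε : 0 < 1 - α12 * α21 * (δ * ε))
    (hDδ : 0 < 1 - α12 * α21 * δ)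
    (hDε : 0 < 1 - α12 * α21 * ε)
    (hside : (1 < δ ∧ 1 < ε) ∨ (δ < 1 ∧ ε < 1)) :
    pi1 α01 α02 α12 α21 δ ε > pi1 α01 α02 α12 α21 δ 1 * pi1 α01 α02 α12 α21 1 ε ∧
    pi2 α01 α02 α12 α21 δ ε > pi2 α01 α02 α12 α21 δ 1 * pi2 α01 α02 α12 α21 1 ε := by
  obtain ⟨ha0, ha1⟩ := h12
  obtain ⟨hb0, hb1⟩ := h21
  subst hα01 hα02
  have hkey : 0 < (δ - 1) * (ε - 1) := by
    rcases hside with ⟨h1, h2⟩ | ⟨h1, h2⟩ <;> nlinarith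
  have hD1 : (0:ℝ) < 1 - α21 * α12 * δ * ε := by nlinarith
  have hD2 : (0:ℝ) < 1 - α21 * α12 * δ * 1 := by nlinarith
  have hD3 : (0:ℝ) < 1 - α21 * α12 * 1 * ε := by nlinarith
  have hN1 : (0:ℝ) < (1 - α21) + α21 * (1 - α12) * ε := by nlinarith [mul_pos (mul_pos hb0 (show (0:ℝ) < 1 - α12 by linarith)) hε]
  have hN2 : (0:ℝ) < (1 - α12) + α12 * (1 - α21) * δ := by nlinarith [mul_pos (mul_pos ha0 (show (0:ℝ) < 1 - α21 by linarith)) hδ]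
  constructor
  · rw [pi1, pi1, pi1, gt_iff_lt, div_mul_div_comm, div_lt_div_iff₀ (by positivity) hD1]
    nlinarith [mul_pos (mul_pos hδ hN1) (mul_pos (mul_pos ha0 hb0) hkey)]
  · rw [pi2, pi2, pi2, gt_iff_lt, div_mul_div_comm, div_lt_div_iff₀ (by positivity) hD1]
    nlinarith [mul_pos (mul_pos hε hN2) (mul_pos (mul_pos ha0 hb0) hkey)]
end

section
/- Let α12, α21 ∈ (0,1), α01 = 1 - α21, α02 = 1 - α12, and define π1(δ,1) = (α01·δ + α21·α02·δ)/(1 - α21·α12·δ). For all δ, δ' > 0 with 1 - α12·α21·δδ' > 0, 1 - α12·α21·δ > 0, 1 - α12·α21·δ' > 0, we have π1(δδ',1) - π1(δ,1)·π1(δ',1) = (1-δ)(1-δ')·δδ'·(1 - α12·α21)·α12·α21 / [(1 - α12·α21·δδ')(1 - α12·α21·δ)(1 - α12·α21·δ')]. In particular, if δ and δ' lie on the same side of 1 then π1(δδ',1) > π1(δ,1)·π1(δ',1). -/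
/-- Two-sector transcendent equilibrium price of commodity 1 with a shock only
in sector 1 (i.e., ε = 1). -/
noncomputable def pi1one (α01 α02 α12 α21 δ : ℝ) : ℝ :=
  (α01 * δ + α21 * α02 * δ) / (1 - α21 * α12 * δ)

theorem pi1_successive_shock_identity
    (α12 α21 : ℝ) (h12 : α12 ∈ Set.Ioo (0:ℝ) 1) (h21 : α21 ∈ Set.Ioo (0:ℝ) 1)
    (α01 α02 : ℝ) (hα01 : α01 = 1 - α21) (hα02 : α02 = 1 - α12)
    (δ δ' : ℝ) (hδ : 0 < δ) (hδ' : 0 < δ')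
    (hDδδ' : 0 < 1 - α12 * α21 * (δ * δ'))
    (hDδ : 0 < 1 - α12 * α21 * δ)
    (hDδ' : 0 < 1 - α12 * α21 * δ') :
    pi1one α01 α02 α12 α21 (δ * δ') -
        pi1one α01 α02 α12 α21 δ * pi1one α01 α02 α12 α21 δ' =
      (1 - δ) * (1 - δ') * (δ * δ') * (1 - α12 * α21) * (α12 * α21) /
        ((1 - α12 * α21 * (δ * δ')) * (1 - α12 * α21 * δ) * (1 - α12 * α21 * δ')) ∧
    ((1 < δ ∧ 1 < δ') ∨ (δ < 1 ∧ δ' < 1) →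
      pi1one α01 α02 α12 α21 (δ * δ') >
        pi1one α01 α02 α12 α21 δ * pi1one α01 α02 α12 α21 δ') := by
  obtain ⟨h12a, h12b⟩ := h12
  obtain ⟨h21a, h21b⟩ := h21
  have key : pi1one α01 α02 α12 α21 (δ * δ') -
        pi1one α01 α02 α12 α21 δ * pi1one α01 α02 α12 α21 δ' =
      (1 - δ) * (1 - δ') * (δ * δ') * (1 - α12 * α21) * (α12 * α21) /
        ((1 - α12 * α21 * (δ * δ')) * (1 - α12 * α21 * δ) * (1 - α12 * α21 * δ')) := by
    unfold pi1one
    subst hα01 hα02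
    have h1 : (1 - α21 * α12 * (δ * δ')) ≠ 0 := by nlinarith
    have h2 : (1 - α21 * α12 * δ) ≠ 0 := by nlinarith
    have h3 : (1 - α21 * α12 * δ') ≠ 0 := by nlinarith
    have h4 := hDδδ'.ne'
    have h5 := hDδ.ne'
    have h6 := hDδ'.ne'
    rw [div_mul_div_comm, div_sub_div _ _ h1 (mul_ne_zero h2 h3),
      div_eq_div_iff (mul_ne_zero h1 (mul_ne_zero h2 h3)) (mul_ne_zero (mul_ne_zero h4 h5) h6)]
    ring
  refine ⟨key, fun h => ?_⟩
  have hnum : 0 < (1 - δ) * (1 - δ') := by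
    rcases h with ⟨h1, h2⟩ | ⟨h1, h2⟩ <;> nlinarith
  have hpos : 0 < (1 - δ) * (1 - δ') * (δ * δ') * (1 - α12 * α21) * (α12 * α21) /
        ((1 - α12 * α21 * (δ * δ')) * (1 - α12 * α21 * δ) * (1 - α12 * α21 * δ')) := by
    apply div_pos
    · have : 0 < 1 - α12 * α21 := by nlinarith
      positivity
    · positivity
  linarith [key]
end

section
/- In the two-sector model with α12, α21 ∈ (0,1), α01 = 1 - α21, α02 = 1 - α12, and expenditure shares κ1, κ2 > 0 with κ1 + κ2 = 1, define log V(δ,ε) = -(1/(1-σ))·(κ1·log π1(δ,ε) + κ2·log π2(δ,ε)) for σ ≠ 1. If δ, ε lie on the same side of 1 (both > 1 or both < 1) and all denominators 1 - α12α21δε, 1 - α12α21δ, 1 - α12α21ε are positive, then: log V(δ,ε) < log V(δ,1) + log V(1,ε) when σ < 1, and log V(δ,ε) > log V(δ,1) + log V(1,ε) when σ > 1. -/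
/-- Log aggregate output (Domar aggregation with Cobb-Douglas household). -/
noncomputable def logV (α01 α02 α12 α21 κ1 κ2 σ δ ε : ℝ) : ℝ :=
  -(1 / (1 - σ)) * (κ1 * Real.log (pi1 α01 α02 α12 α21 δ ε) +
    κ2 * Real.log (pi2 α01 α02 α12 α21 δ ε))

theorem domar_synergism
    (α12 α21 : ℝ) (h12 : α12 ∈ Set.Ioo (0:ℝ) 1) (h21 : α21 ∈ Set.Ioo (0:ℝ) 1)
    (α01 α02 : ℝ) (hα01 : α01 = 1 - α21) (hα02 : α02 = 1 - α12)
    (κ1 κ2 : ℝ) (hκ1 : 0 < κ1) (hκ2 : 0 < κ2) (hκ : κ1 + κ2 = 1)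
    (σ : ℝ) (hσ : σ ≠ 1)
    (δ ε : ℝ) (hδ : 0 < δ) (hε : 0 < ε)
    (hside : (1 < δ ∧ 1 < ε) ∨ (δ < 1 ∧ ε < 1))
    (hDδε : 0 < 1 - α12 * α21 * (δ * ε))
    (hDδ : 0 < 1 - α12 * α21 * δ)
    (hDε : 0 < 1 - α12 * α21 * ε) :
    (σ < 1 → logV α01 α02 α12 α21 κ1 κ2 σ δ ε <
        logV α01 α02 α12 α21 κ1 κ2 σ δ 1 + logV α01 α02 α12 α21 κ1 κ2 σ 1 ε) ∧
    (1 < σ → logV α01 α02 α12 α21 κ1 κ2 σ δ ε >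
        logV α01 α02 α12 α21 κ1 κ2 σ δ 1 + logV α01 α02 α12 α21 κ1 κ2 σ 1 ε) := by
  obtain ⟨h12a, h12b⟩ := h12
  obtain ⟨h21a, h21b⟩ := h21
  have ha0 : 0 < α12 * α21 := mul_pos h12a h21a
  have hD1 : 0 < 1 - α12 * α21 := by nlinarith
  have hδε1 : 0 < (δ - 1) * (ε - 1) := by
    rcases hside with ⟨h1, h2⟩ | ⟨h1, h2⟩ <;> nlinarith
  have hA1 : 0 < α01 + α21 * α02 * ε := by
    have := mul_pos (mul_pos h21a (show (0:ℝ) < α02 by nlinarith)) hε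
    nlinarith
  have hA2 : 0 < α02 + α12 * α01 * δ := by
    have := mul_pos (mul_pos h12a (show (0:ℝ) < α01 by nlinarith)) hδ
    nlinarith
  -- rewrite the six prices
  have e1 : pi1 α01 α02 α12 α21 δ ε
      = δ * (α01 + α21 * α02 * ε) / (1 - α12 * α21 * (δ * ε)) := by
    rw [pi1]; congr 1 <;> ring
  have e2 : pi1 α01 α02 α12 α21 δ 1
      = δ * (1 - α12 * α21) / (1 - α12 * α21 * δ) := by
    rw [pi1, hα01, hα02]; congr 1 <;> ring
  have e3 : pi1 α01 α02 α12 α21 1 ε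
      = (α01 + α21 * α02 * ε) / (1 - α12 * α21 * ε) := by
    rw [pi1]; congr 1 <;> ring
  have e4 : pi2 α01 α02 α12 α21 δ ε
      = ε * (α02 + α12 * α01 * δ) / (1 - α12 * α21 * (δ * ε)) := by
    rw [pi2]; congr 1 <;> ring
  have e5 : pi2 α01 α02 α12 α21 δ 1
      = (α02 + α12 * α01 * δ) / (1 - α12 * α21 * δ) := by
    rw [pi2]; congr 1 <;> ring
  have e6 : pi2 α01 α02 α12 α21 1 ε
      = ε * (1 - α12 * α21) / (1 - α12 * α21 * ε) := by
    rw [pi2, hα01, hα02]; congr 1 <;> ring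
  have L1 : Real.log (pi1 α01 α02 α12 α21 δ ε)
      = Real.log δ + Real.log (α01 + α21 * α02 * ε)
        - Real.log (1 - α12 * α21 * (δ * ε)) := by
    rw [e1, Real.log_div (by positivity) (ne_of_gt hDδε),
      Real.log_mul (ne_of_gt hδ) (ne_of_gt hA1)]
  have L2 : Real.log (pi1 α01 α02 α12 α21 δ 1)
      = Real.log δ + Real.log (1 - α12 * α21) - Real.log (1 - α12 * α21 * δ) := by
    rw [e2, Real.log_div (by positivity) (ne_of_gt hDδ),
      Real.log_mul (ne_of_gt hδ) (ne_of_gt hD1)]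
  have L3 : Real.log (pi1 α01 α02 α12 α21 1 ε)
      = Real.log (α01 + α21 * α02 * ε) - Real.log (1 - α12 * α21 * ε) := by
    rw [e3, Real.log_div (ne_of_gt hA1) (ne_of_gt hDε)]
  have L4 : Real.log (pi2 α01 α02 α12 α21 δ ε)
      = Real.log ε + Real.log (α02 + α12 * α01 * δ)
        - Real.log (1 - α12 * α21 * (δ * ε)) := by
    rw [e4, Real.log_div (by positivity) (ne_of_gt hDδε),
      Real.log_mul (ne_of_gt hε) (ne_of_gt hA2)]
  have L5 : Real.log (pi2 α01 α02 α12 α21 δ 1)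
      = Real.log (α02 + α12 * α01 * δ) - Real.log (1 - α12 * α21 * δ) := by
    rw [e5, Real.log_div (ne_of_gt hA2) (ne_of_gt hDδ)]
  have L6 : Real.log (pi2 α01 α02 α12 α21 1 ε)
      = Real.log ε + Real.log (1 - α12 * α21) - Real.log (1 - α12 * α21 * ε) := by
    rw [e6, Real.log_div (by positivity) (ne_of_gt hDε),
      Real.log_mul (ne_of_gt hε) (ne_of_gt hD1)]
  -- key inequality
  have hprod : (1 - α12 * α21) * (1 - α12 * α21 * (δ * ε))
      < (1 - α12 * α21 * δ) * (1 - α12 * α21 * ε) := by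
    nlinarith [mul_pos ha0 hδε1]
  have key : 0 < Real.log (1 - α12 * α21 * δ) + Real.log (1 - α12 * α21 * ε)
      - Real.log (1 - α12 * α21) - Real.log (1 - α12 * α21 * (δ * ε)) := by
    have h := Real.log_lt_log (by positivity) hprod
    rw [Real.log_mul (ne_of_gt hD1) (ne_of_gt hDδε),
      Real.log_mul (ne_of_gt hDδ) (ne_of_gt hDε)] at h
    linarith
  have hEq : logV α01 α02 α12 α21 κ1 κ2 σ δ ε
      - (logV α01 α02 α12 α21 κ1 κ2 σ δ 1 + logV α01 α02 α12 α21 κ1 κ2 σ 1 ε)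
      = -(1 / (1 - σ)) * ((κ1 + κ2) *
        (Real.log (1 - α12 * α21 * δ) + Real.log (1 - α12 * α21 * ε)
          - Real.log (1 - α12 * α21) - Real.log (1 - α12 * α21 * (δ * ε)))) := by
    simp only [logV, L1, L2, L3, L4, L5, L6]; ring
  rw [hκ, one_mul] at hEq
  constructor
  · intro hσ1
    have ht : 0 < 1 / (1 - σ) := div_pos one_pos (by linarith)
    have := mul_pos ht key
    linarith [hEq]
  · intro hσ1
    have ht : 1 / (1 - σ) < 0 := div_neg_of_pos_of_neg one_pos (by linarith)
    have := mul_pos (neg_pos.mpr ht) key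
    linarith [hEq]
end
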